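/- Let the trap configuration satisfy the quadratic recursion with constant c, where c > 1 (and c > |I_1|^{-1}). Then the expected survival time of the trapped random walk is infinite: 𝔼(τ) = ∞. -/

import Mathlib

open MeasureTheory ENNReal Set

noncomputable section

/-- A trap configuration: a trap at the origin and infinitely many traps. -/
def IsTrapConfig (ω : ℕ → Bool) : Prop :=
  ω 0 = true ∧ {x : ℕ | ω x = true}.Infinite

/-- The location `x_i` of the `i`-th trap (traps enumerated in increasing order, `x_0 = 0`). -/
def trapLoc (ω : ℕ → Bool) (i : ℕ) : ℕ :=
  Nat.nth (fun x => ω x = true) i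

/-- The length `|I_i| = x_i - x_{i-1}` of the `i`-th interval between traps, for `i ≥ 1`. -/
def gapLen (ω : ℕ → Bool) (i : ℕ) : ℕ :=
  trapLoc ω i - trapLoc ω (i - 1)

/-- The landscape satisfies the quadratic recursion `|I_{j+1}| = c * |I_j|^2` for all `j ≥ 1`. -/
def QuadRec (ω : ℕ → Bool) (c : ℝ) : Prop :=
  ∀ j : ℕ, 1 ≤ j → (gapLen ω (j + 1) : ℝ) = c * (gapLen ω j : ℝ) ^ 2

/-- One-step transition probabilities of the trapped random walk on `ℕ ∪ {*}`,
where `none` plays the role of the absorbing cemetery state `*`. -/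
def transProb (ω : ℕ → Bool) : Option ℕ → Option ℕ → ℝ
  | none, none => 1
  | none, some _ => 0
  | some x, none => if ω x = true then 1 / 3 else 0
  | some x, some y =>
    if x = 0 then (if y = 1 then 2 / 3 else 0)
    else if ω x = true then (if y = x - 1 ∨ y = x + 1 then 1 / 3 else 0)
    else (if y = x - 1 ∨ y = x + 1 then 1 / 2 else 0)

/-- `S` is (a version of) the trapped random walk in the landscape `ω` under the probability
measure `P`: it starts at `0` and is a Markov chain with transition probabilities `transProb ω`. -/
def IsTrappedRW (ω : ℕ → Bool) {Ω : Type*} [MeasurableSpace Ω]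
    (P : Measure Ω) (S : ℕ → Ω → Option ℕ) : Prop :=
  IsProbabilityMeasure P ∧
  (∀ (n : ℕ) (y : Option ℕ), MeasurableSet {a | S n a = y}) ∧
  P {a | S 0 a = some 0} = 1 ∧
  ∀ (n : ℕ) (path : ℕ → Option ℕ) (y : Option ℕ),
    P {a | (∀ i ≤ n, S i a = path i) ∧ S (n + 1) a = y}
      = ENNReal.ofReal (transProb ω (path n) y) * P {a | ∀ i ≤ n, S i a = path i}

/-- The survival time `τ = inf {k : S k = *}`, valued in `ℕ∞`. -/
def survivalTime {Ω : Type*} (S : ℕ → Ω → Option ℕ) (a : Ω) : ℕ∞ :=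
  sInf {t : ℕ∞ | ∃ k : ℕ, (k : ℕ∞) = t ∧ S k a = none}

/-- The expected survival time `𝔼(τ)`, valued in `ℝ≥0∞`. -/
def expSurvival {Ω : Type*} [MeasurableSpace Ω] (P : Measure Ω)
    (S : ℕ → Ω → Option ℕ) : ℝ≥0∞ :=
  ∫⁻ a, ((survivalTime S a : ℕ∞) : ℝ≥0∞) ∂P

/-- Two landscapes are similar in the tail. -/
def SimilarInTail (ω₁ ω₂ : ℕ → Bool) : Prop :=
  ∃ p₁ p₂ : ℕ, ∀ x : ℕ, ω₁ (p₁ + x) = ω₂ (p₂ + x)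

/-- Indicator that a state is a trap site. -/
def trapInd (ω : ℕ → Bool) : Option ℕ → Bool
  | none => false
  | some x => ω x

/-- Number of visits to the trap set at times `1, …, k`. -/
def visitCount {Ω : Type*} (ω : ℕ → Bool) (S : ℕ → Ω → Option ℕ) (a : Ω) (k : ℕ) : ℕ :=
  ((Finset.Icc 1 k).filter fun j => trapInd ω (S j a) = true).card

/-- `N`, the total number of visits to the trap set at times `≥ 1` (before absorption). -/
def numVisits {Ω : Type*} (ω : ℕ → Bool) (S : ℕ → Ω → Option ℕ) (a : Ω) : ℕ∞ :=
  ⨆ k : ℕ, (visitCount ω S a k : ℕ∞)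

/-- The hitting times `𝒯_i`: `𝒯_0 = 0` and `𝒯_i = inf {k ≥ 1 : #visits to D in [1,k] = i}`. -/
def hitTime {Ω : Type*} (ω : ℕ → Bool) (S : ℕ → Ω → Option ℕ) (i : ℕ) (a : Ω) : ℕ∞ :=
  if i = 0 then 0
  else sInf {t : ℕ∞ | ∃ k : ℕ, (k : ℕ∞) = t ∧ 1 ≤ k ∧ visitCount ω S a k = i}

/-- The inter-arrival times `Y_i = 𝒯_i - 𝒯_{i-1}` for `1 ≤ i ≤ N`, and `Y_i = 0` for `i > N`. -/
def interArrival {Ω : Type*} (ω : ℕ → Bool) (S : ℕ → Ω → Option ℕ) (i : ℕ) (a : Ω) : ℕ∞ :=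
  if 1 ≤ i ∧ (i : ℕ∞) ≤ numVisits ω S a
  then hitTime ω S i a - hitTime ω S (i - 1) a else 0

/-- `Y_i` viewed as an `ℝ≥0∞`-valued random variable. -/
def Yfun {Ω : Type*} (ω : ℕ → Bool) (S : ℕ → Ω → Option ℕ) (i : ℕ) (a : Ω) : ℝ≥0∞ :=
  ((interArrival ω S i a : ℕ∞) : ℝ≥0∞)

/-- The embedded walk `ξ_j = S_{𝒯_j}` for `j ≤ N`, and `ξ_j = *` for `j > N`. -/
def embWalk {Ω : Type*} (ω : ℕ → Bool) (S : ℕ → Ω → Option ℕ) (j : ℕ) (a : Ω) : Option ℕ :=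
  if (j : ℕ∞) ≤ numVisits ω S a then S (hitTime ω S j a).toNat a else none

/-- Sign of the increment of the embedded walk (an arbitrary junk value `2` is produced
if one of the two states is the cemetery state). -/
def stepSign : Option ℕ → Option ℕ → ℤ
  | some x, some y => Int.sign ((y : ℤ) - (x : ℤ))
  | _, _ => 2

/-- `κ` belongs to `𝒦`: entries `κ_1, …, κ_{i-1}` lie in `{-1,0,1}` and all partial sums
are nonnegative. -/
def InKappaSet (i : ℕ) (κ : ℕ → ℤ) : Prop :=
  (∀ j : ℕ, 1 ≤ j → j ≤ i - 1 → κ j = -1 ∨ κ j = 0 ∨ κ j = 1) ∧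
  ∀ m : ℕ, 1 ≤ m → m ≤ i - 1 → 0 ≤ ∑ n ∈ Finset.Icc 1 m, κ n

/-- The event `A_κ`: the walk visits at least `i-1` traps and the embedded walk moves
according to `κ` (for `i = 1` this is the whole sample space). -/
def eventA {Ω : Type*} (ω : ℕ → Bool) (S : ℕ → Ω → Option ℕ) (i : ℕ) (κ : ℕ → ℤ) : Set Ω :=
  {a | ((i - 1 : ℕ) : ℕ∞) ≤ numVisits ω S a ∧
    ∀ j : ℕ, 1 ≤ j → j ≤ i - 1 →
      stepSign (embWalk ω S (j - 1) a) (embWalk ω S j a) = κ j}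

/-- The event `A_κ⁺ = A_κ ∩ {S_{𝒯_{i-1}+1} = S_{𝒯_{i-1}} + 1}` (the whole sample space
for `i = 1`). -/
def eventAplus {Ω : Type*} (ω : ℕ → Bool) (S : ℕ → Ω → Option ℕ) (i : ℕ) (κ : ℕ → ℤ) :
    Set Ω :=
  if i = 1 then Set.univ
  else eventA ω S i κ ∩
    {a | ∃ x : ℕ, S (hitTime ω S (i - 1) a).toNat a = some x ∧
      S ((hitTime ω S (i - 1) a).toNat + 1) a = some (x + 1)}

/-- Conditional expectation `𝔼(f | A)` of an `ℝ≥0∞`-valued function given an event `A`. -/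
def condExpOn {Ω : Type*} [MeasurableSpace Ω] (P : Measure Ω) (A : Set Ω)
    (f : Ω → ℝ≥0∞) : ℝ≥0∞ :=
  (∫⁻ a in A, f a ∂P) / P A

/-- Conditional probability `ℙ(A | B)`. -/
def condProb {Ω : Type*} [MeasurableSpace Ω] (P : Measure Ω) (A B : Set Ω) : ℝ≥0∞ :=
  P (A ∩ B) / P B

/-- Crossing times between `b` and `b+1`, shifted by one: `crossTime S b 0 = l_{-1} = 0`,
`crossTime S b (n+1) = l_n` where `l_0 = inf {t : S t = b}` and `l_i` alternately hits
`b+1` and `b`. -/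
def crossTime {Ω : Type*} (S : ℕ → Ω → Option ℕ) (b : ℕ) : ℕ → Ω → ℕ∞
  | 0, _ => 0
  | 1, a => sInf {t : ℕ∞ | ∃ k : ℕ, (k : ℕ∞) = t ∧ S k a = some b}
  | n + 2, a =>
    if crossTime S b (n + 1) a = ⊤ then ⊤
    else
      sInf {t : ℕ∞ | ∃ k : ℕ, (k : ℕ∞) = t ∧ crossTime S b (n + 1) a ≤ (k : ℕ∞) ∧
        S k a = some (if S (crossTime S b (n + 1) a).toNat a = some b then b + 1 else b)}

/-- `T_n = τ ∧ l_n - τ ∧ l_{n-1}` (with the index shift `l_n = crossTime S b (n+1)`). -/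
def crossDur {Ω : Type*} (S : ℕ → Ω → Option ℕ) (b : ℕ) (n : ℕ) (a : Ω) : ℕ∞ :=
  min (survivalTime S a) (crossTime S b (n + 1) a)
    - min (survivalTime S a) (crossTime S b n a)

/-- `ℰ_0 = 𝔼[T_0]`. -/
def cE0 {Ω : Type*} [MeasurableSpace Ω] (P : Measure Ω) (S : ℕ → Ω → Option ℕ)
    (b : ℕ) : ℝ≥0∞ :=
  ∫⁻ a, ((crossDur S b 0 a : ℕ∞) : ℝ≥0∞) ∂P

/-- `𝒫_0 = ℙ(l_0 < ∞)`. -/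
def cP0 {Ω : Type*} [MeasurableSpace Ω] (P : Measure Ω) (S : ℕ → Ω → Option ℕ)
    (b : ℕ) : ℝ≥0∞ :=
  P {a | crossTime S b 1 a ≠ ⊤}

/-- `ℰ₊ = 𝔼[T_2 | l_1 < ∞]`. -/
def cEplus {Ω : Type*} [MeasurableSpace Ω] (P : Measure Ω) (S : ℕ → Ω → Option ℕ)
    (b : ℕ) : ℝ≥0∞ :=
  condExpOn P {a | crossTime S b 2 a ≠ ⊤} (fun a => ((crossDur S b 2 a : ℕ∞) : ℝ≥0∞))

/-- `ℰ₋ = 𝔼[T_3 | l_2 < ∞]`. -/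
def cEminus {Ω : Type*} [MeasurableSpace Ω] (P : Measure Ω) (S : ℕ → Ω → Option ℕ)
    (b : ℕ) : ℝ≥0∞ :=
  condExpOn P {a | crossTime S b 3 a ≠ ⊤} (fun a => ((crossDur S b 3 a : ℕ∞) : ℝ≥0∞))

/-- `𝒫₊ = ℙ(l_2 < ∞ | l_1 < ∞)`. -/
def cPplus {Ω : Type*} [MeasurableSpace Ω] (P : Measure Ω) (S : ℕ → Ω → Option ℕ)
    (b : ℕ) : ℝ≥0∞ :=
  P {a | crossTime S b 3 a ≠ ⊤} / P {a | crossTime S b 2 a ≠ ⊤}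

/-- `𝒫₋ = ℙ(l_3 < ∞ | l_2 < ∞)`. -/
def cPminus {Ω : Type*} [MeasurableSpace Ω] (P : Measure Ω) (S : ℕ → Ω → Option ℕ)
    (b : ℕ) : ℝ≥0∞ :=
  P {a | crossTime S b 4 a ≠ ⊤} / P {a | crossTime S b 3 a ≠ ⊤}

/-- `ω₂` is obtained from `ω₁` by lengthening the `k`-th interval by one site. -/
def IsLengthened (ω₁ ω₂ : ℕ → Bool) (k : ℕ) : Prop :=
  (∀ x : ℕ, x ≤ trapLoc ω₁ (k - 1) → ω₂ x = ω₁ x) ∧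
  ω₂ (trapLoc ω₁ (k - 1) + 1) = false ∧
  ∀ x : ℕ, trapLoc ω₁ (k - 1) + 1 < x → ω₂ x = ω₁ (x - 1)

end

/-!
Let `U x` be the expected lifetime of the walk started at `x`, computed from the survival
probabilities of the killed kernel `K`. The Markov property gives `U 0 ≤ 𝔼 τ`. If `U 0 < ∞`, then
`U` is finite everywhere and `v = U` solves `v = 1 + K v` on `x ≥ 1`. Between two traps this makes
`v` a parabola with second difference `-2`; at a trap the slope jumps by `v(x_i) - 3`. Eliminating
the slopes gives a three-term recurrence for the trap values `a_i = v(x_i)`, and under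
`|I_{j+1}| = c |I_j|²` with `c > 1` the ratios `a_{i+1} / |I_{i+2}|` eventually drop by `1/c` at
every step. This is impossible for `v ≥ 0`.
-/

open Filter

section Lifetime

variable {Ω : Type*}

lemma lt_survivalTime_iff (S : ℕ → Ω → Option ℕ) (a : Ω) (n : ℕ) :
    (n : ℕ∞) < survivalTime S a ↔ ∀ i ≤ n, S i a ≠ none := by
  rw [survivalTime, ← not_iff_not, not_lt, ← ENat.lt_add_one_iff (ENat.natCast_ne_top n),
    sInf_lt_iff]
  push Not
  constructor
  · rintro ⟨_, ⟨i, rfl, hi⟩, hlt⟩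
    exact ⟨i, Nat.lt_succ_iff.mp (by exact_mod_cast hlt), hi⟩
  · rintro ⟨i, hi, hnone⟩
    exact ⟨i, ⟨i, rfl, hnone⟩, by exact_mod_cast Nat.lt_add_one_of_le hi⟩

lemma tsum_indicator_lt_eq (τ : ℕ∞) :
    ∑' n : ℕ, {n : ℕ | (n : ℕ∞) < τ}.indicator (fun _ => (1 : ℝ≥0∞)) n = τ := by
  rw [← tsum_subtype, ENNReal.tsum_set_one]
  induction τ using ENat.recTopCoe with
  | top => simp
  | coe m =>
    rw [show {n : ℕ | (n : ℕ∞) < m} = ↑(Finset.range m) by ext; simp,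
      Set.encard_coe_eq_coe_finsetCard]
    simp

def pathCylinder (S : ℕ → Ω → Option ℕ) (m : ℕ) (f : ℕ → ℕ) : Set Ω :=
  {a | ∀ i ≤ m, S i a = some (f i)}

lemma pathCylinder_update_subset {S : ℕ → Ω → Option ℕ} (m : ℕ) (f : ℕ → ℕ) (y : ℕ) :
    pathCylinder S (m + 1) (Function.update f (m + 1) y) ⊆ pathCylinder S m f :=
  fun a ha i hi => by simpa [Function.update_of_ne (by omega : i ≠ m + 1)] using ha i (by omega)

variable [MeasurableSpace Ω]

lemma lintegral_eq_tsum_measure_lt (P : Measure Ω) (τ : Ω → ℕ∞)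
    (hτ : ∀ n : ℕ, MeasurableSet {a | (n : ℕ∞) < τ a}) :
    ∫⁻ a, (τ a : ℝ≥0∞) ∂P = ∑' n : ℕ, P {a | (n : ℕ∞) < τ a} := by
  have hsum (a : Ω) : (τ a : ℝ≥0∞) = ∑' n : ℕ, {a | (n : ℕ∞) < τ a}.indicator 1 a := by
    simpa [Set.indicator_apply] using (tsum_indicator_lt_eq (τ a)).symm
  simp_rw [hsum]
  rw [lintegral_tsum fun n => (measurable_one.indicator (hτ n)).aemeasurable]
  exact tsum_congr fun n => lintegral_indicator_one (hτ n)

end Lifetime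

/-- The probability that the walk started at `x` is still alive after `n` steps. At `x = 0` the
truncated `x - 1 = 0` is harmless: the kernel gives it weight `0`. -/
noncomputable def survivalProb (ω : ℕ → Bool) : ℕ → ℕ → ℝ≥0∞
  | 0, _ => 1
  | n + 1, x => ENNReal.ofReal (transProb ω (some x) (some (x - 1))) * survivalProb ω n (x - 1)
      + ENNReal.ofReal (transProb ω (some x) (some (x + 1))) * survivalProb ω n (x + 1)

noncomputable def meanLifetime (ω : ℕ → Bool) (x : ℕ) : ℝ≥0∞ := ∑' n, survivalProb ω n x

/-- `v = 1 + K v` away from the origin: the equation satisfied by `x ↦ 𝔼ₓ τ`. -/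
def SolvesPoissonEq (ω : ℕ → Bool) (v : ℕ → ℝ) : Prop :=
  ∀ x, v (x + 1) = 1 + transProb ω (some (x + 1)) (some x) * v x
    + transProb ω (some (x + 1)) (some (x + 2)) * v (x + 2)

lemma transProb_nonneg (ω : ℕ → Bool) (x y : Option ℕ) : 0 ≤ transProb ω x y := by
  unfold transProb
  split <;> (try split_ifs) <;> norm_num

lemma transProb_succ_pos (ω : ℕ → Bool) (x : ℕ) : 0 < transProb ω (some x) (some (x + 1)) := by
  simp only [transProb]
  split_ifs <;> simp_all

lemma meanLifetime_eq (ω : ℕ → Bool) (x : ℕ) :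
    meanLifetime ω x = 1 + (ENNReal.ofReal (transProb ω (some x) (some (x - 1)))
      * meanLifetime ω (x - 1)
      + ENNReal.ofReal (transProb ω (some x) (some (x + 1))) * meanLifetime ω (x + 1)) := by
  rw [meanLifetime, tsum_eq_zero_add' ENNReal.summable]
  simp only [survivalProb, ENNReal.tsum_add, ENNReal.tsum_mul_left, meanLifetime]

lemma meanLifetime_ne_top {ω : ℕ → Bool} (h₀ : meanLifetime ω 0 ≠ ⊤) (x : ℕ) :
    meanLifetime ω x ≠ ⊤ := by
  induction x with
  | zero => exact h₀
  | succ x ih =>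
    refine fun htop => ih ?_
    rw [meanLifetime_eq, htop,
      ENNReal.mul_top (ENNReal.ofReal_pos.2 (transProb_succ_pos ω x)).ne']
    simp

lemma solvesPoissonEq_meanLifetime {ω : ℕ → Bool} (h₀ : meanLifetime ω 0 ≠ ⊤) :
    SolvesPoissonEq ω fun x => (meanLifetime ω x).toReal := by
  intro x
  dsimp only
  rw [meanLifetime_eq, Nat.add_sub_cancel]
  simp [ENNReal.toReal_add, ENNReal.mul_ne_top, meanLifetime_ne_top h₀, transProb_nonneg,
    add_assoc]

section TrappedRW

variable {Ω : Type*} [MeasurableSpace Ω] {ω : ℕ → Bool} {P : Measure Ω} {S : ℕ → Ω → Option ℕ}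

lemma measurableSet_pathCylinder (hS : IsTrappedRW ω P S) (m : ℕ) (f : ℕ → ℕ) :
    MeasurableSet (pathCylinder S m f) := by
  simp only [pathCylinder, ofPred_forall]
  exact .iInter fun i => .iInter fun _ => hS.2.1 i _

lemma measurableSet_lt_survivalTime (hS : IsTrappedRW ω P S) (n : ℕ) :
    MeasurableSet {a | (n : ℕ∞) < survivalTime S a} := by
  simp only [lt_survivalTime_iff, ofPred_forall]
  exact .iInter fun i => .iInter fun _ => (hS.2.1 i none).compl

lemma measure_pathCylinder_update (hS : IsTrappedRW ω P S) (m : ℕ) (f : ℕ → ℕ) (y : ℕ) :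
    P (pathCylinder S (m + 1) (Function.update f (m + 1) y)) =
      ENNReal.ofReal (transProb ω (some (f m)) (some y)) * P (pathCylinder S m f) := by
  have hset : pathCylinder S (m + 1) (Function.update f (m + 1) y) =
      {a | (∀ i ≤ m, S i a = some (f i)) ∧ S (m + 1) a = some y} := by
    ext a
    constructor
    · intro h
      exact ⟨fun i hi => by
        simpa [Function.update_of_ne (by omega : i ≠ m + 1)] using h i (by omega),
        by simpa using h (m + 1) le_rfl⟩
    · rintro ⟨hf, hy⟩ i hi
      rcases Nat.le_succ_iff.mp hi with hi | rfl
      · simpa [Function.update_of_ne (by omega : i ≠ m + 1)] using hf i hi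
      · simpa using hy
  rw [hset]
  exact hS.2.2.2 m (fun i => some (f i)) (some y)

lemma survivalProb_mul_le (hS : IsTrappedRW ω P S) (n : ℕ) :
    ∀ (m : ℕ) (f : ℕ → ℕ), survivalProb ω n (f m) * P (pathCylinder S m f) ≤
      P (pathCylinder S m f ∩ {a | ((m + n : ℕ) : ℕ∞) < survivalTime S a}) := by
  induction n with
  | zero =>
    intro m f
    rw [survivalProb, one_mul]
    refine measure_mono fun a ha => ⟨ha, (lt_survivalTime_iff S a _).2 fun i hi => ?_⟩
    simp [ha i hi]
  | succ n ih =>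
    intro m f
    set A := {a | ((m + 1 + n : ℕ) : ℕ∞) < survivalTime S a}
    set fm := Function.update f (m + 1) (f m - 1)
    set fp := Function.update f (m + 1) (f m + 1)
    have hdisj : Disjoint (pathCylinder S (m + 1) fm ∩ A) (pathCylinder S (m + 1) fp ∩ A) := by
      refine Set.disjoint_left.2 fun a ham hap => ?_
      have h := (ham.1 (m + 1) le_rfl).symm.trans (hap.1 (m + 1) le_rfl)
      simp [fm, fp] at h
    have hsub : pathCylinder S (m + 1) fm ∩ A ∪ pathCylinder S (m + 1) fp ∩ A ⊆
        pathCylinder S m f ∩ {a | ((m + (n + 1) : ℕ) : ℕ∞) < survivalTime S a} := by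
      rw [show m + (n + 1) = m + 1 + n by omega]
      exact Set.union_subset (Set.inter_subset_inter_left _ (pathCylinder_update_subset m f _))
        (Set.inter_subset_inter_left _ (pathCylinder_update_subset m f _))
    calc survivalProb ω (n + 1) (f m) * P (pathCylinder S m f)
        = survivalProb ω n (fm (m + 1)) * P (pathCylinder S (m + 1) fm)
          + survivalProb ω n (fp (m + 1)) * P (pathCylinder S (m + 1) fp) := by
          simp only [survivalProb, fm, fp, Function.update_self, measure_pathCylinder_update hS]
          ring
      _ ≤ P (pathCylinder S (m + 1) fm ∩ A) + P (pathCylinder S (m + 1) fp ∩ A) :=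
          add_le_add (ih _ _) (ih _ _)
      _ = P (pathCylinder S (m + 1) fm ∩ A ∪ pathCylinder S (m + 1) fp ∩ A) :=
          (measure_union hdisj ((measurableSet_pathCylinder hS _ _).inter
            (measurableSet_lt_survivalTime hS _))).symm
      _ ≤ _ := measure_mono hsub

lemma survivalProb_le_measure_lt_survivalTime (hS : IsTrappedRW ω P S) (n : ℕ) :
    survivalProb ω n 0 ≤ P {a | (n : ℕ∞) < survivalTime S a} := by
  have h := survivalProb_mul_le hS n 0 fun _ => 0
  rw [show pathCylinder S 0 (fun _ => 0) = {a | S 0 a = some 0} by simp [pathCylinder],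
    hS.2.2.1, mul_one, zero_add] at h
  exact h.trans (measure_mono Set.inter_subset_right)

lemma meanLifetime_zero_le_expSurvival (hS : IsTrappedRW ω P S) :
    meanLifetime ω 0 ≤ expSurvival P S := by
  rw [expSurvival, lintegral_eq_tsum_measure_lt P _ (measurableSet_lt_survivalTime hS)]
  exact ENNReal.tsum_le_tsum (survivalProb_le_measure_lt_survivalTime hS)

end TrappedRW

section TrapGeometry

variable {ω : ℕ → Bool}

lemma IsTrapConfig.trapLoc_strictMono (hω : IsTrapConfig ω) : StrictMono (trapLoc ω) :=
  Nat.nth_strictMono hω.2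

lemma IsTrapConfig.trapLoc_mem (hω : IsTrapConfig ω) (i : ℕ) : ω (trapLoc ω i) = true :=
  Nat.nth_mem_of_infinite hω.2 i

lemma eq_false_of_trapLoc_lt_of_lt_trapLoc_succ {i y : ℕ} (h₁ : trapLoc ω i < y)
    (h₂ : y < trapLoc ω (i + 1)) : ω y = false := by
  by_contra hy
  exact (Nat.le_nth_of_lt_nth_succ h₂ (by simpa using hy)).not_gt h₁

lemma IsTrapConfig.trapLoc_succ (hω : IsTrapConfig ω) (i : ℕ) :
    trapLoc ω (i + 1) = trapLoc ω i + gapLen ω (i + 1) := by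
  have := hω.trapLoc_strictMono (lt_add_one i)
  simp only [gapLen, Nat.add_sub_cancel]
  omega

lemma IsTrapConfig.gapLen_pos (hω : IsTrapConfig ω) (i : ℕ) : 0 < gapLen ω (i + 1) := by
  have := hω.trapLoc_strictMono (lt_add_one i)
  simp only [gapLen, Nat.add_sub_cancel]
  omega

lemma IsTrapConfig.pow_le_gapLen (hω : IsTrapConfig ω) {c : ℝ} (hrec : QuadRec ω c) (hc : 0 ≤ c)
    (k : ℕ) : c ^ k ≤ gapLen ω (k + 1) := by
  induction k with
  | zero => rw [pow_zero]; exact_mod_cast hω.gapLen_pos 0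
  | succ k ih =>
    have h1 : (1 : ℝ) ≤ gapLen ω (k + 1) := by exact_mod_cast hω.gapLen_pos k
    rw [hrec (k + 1) (by omega), pow_succ']
    exact mul_le_mul_of_nonneg_left (ih.trans (by nlinarith)) hc

lemma IsTrapConfig.tendsto_gapLen (hω : IsTrapConfig ω) {c : ℝ} (hrec : QuadRec ω c)
    (hc : 1 < c) : Tendsto (fun i => (gapLen ω (i + 1) : ℝ)) atTop atTop :=
  tendsto_atTop_mono (hω.pow_le_gapLen hrec (by linarith)) (tendsto_pow_atTop_atTop_of_one_lt hc)

end TrapGeometry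

lemma eq_quadratic_of_second_diff {v : ℕ → ℝ} {a n : ℕ}
    (h : ∀ t < n, v (a + t + 2) = 2 * v (a + t + 1) - v (a + t) - 2) :
    ∀ t ≤ n + 1, v (a + t) = v a + t * (v (a + 1) - v a) - t * (t - 1)
  | 0, _ => by simp
  | 1, _ => by simp
  | t + 2, ht => by
    rw [← add_assoc, h t (by omega), add_assoc a t 1,
      eq_quadratic_of_second_diff h (t + 1) (by omega), eq_quadratic_of_second_diff h t (by omega)]
    push_cast
    ring

namespace SolvesPoissonEq

variable {ω : ℕ → Bool} {v : ℕ → ℝ}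

lemma step_of_eq_false (hv : SolvesPoissonEq ω v) {x : ℕ} (hx : ω (x + 1) = false) :
    v (x + 2) = 2 * v (x + 1) - v x - 2 := by
  have h := hv x
  simp only [transProb, hx] at h
  norm_num at h
  linarith

lemma step_of_eq_true (hv : SolvesPoissonEq ω v) {x : ℕ} (hx : ω (x + 1) = true) :
    v (x + 2) = 3 * v (x + 1) - v x - 3 := by
  have h := hv x
  simp only [transProb, hx] at h
  norm_num at h
  linarith

lemma eq_of_le_gapLen (hv : SolvesPoissonEq ω v) (hω : IsTrapConfig ω) (i : ℕ) {t : ℕ}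
    (ht : t ≤ gapLen ω (i + 1)) :
    v (trapLoc ω i + t) = v (trapLoc ω i)
      + t * (v (trapLoc ω i + 1) - v (trapLoc ω i)) - t * (t - 1) := by
  obtain ⟨k, hk⟩ := Nat.exists_eq_add_one.2 (hω.gapLen_pos i)
  refine eq_quadratic_of_second_diff (n := k) (fun s hs => hv.step_of_eq_false ?_) t (hk ▸ ht)
  have hnext := hω.trapLoc_succ i
  exact eq_false_of_trapLoc_lt_of_lt_trapLoc_succ (i := i) (by omega) (by omega)

lemma value_trapLoc_succ (hv : SolvesPoissonEq ω v) (hω : IsTrapConfig ω) (i : ℕ) :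
    v (trapLoc ω (i + 1)) = v (trapLoc ω i)
      + gapLen ω (i + 1) * (v (trapLoc ω i + 1) - v (trapLoc ω i))
      - gapLen ω (i + 1) * (gapLen ω (i + 1) - 1) := by
  rw [hω.trapLoc_succ]
  exact hv.eq_of_le_gapLen hω i le_rfl

lemma slope_trapLoc_succ (hv : SolvesPoissonEq ω v) (hω : IsTrapConfig ω) (i : ℕ) :
    v (trapLoc ω (i + 1) + 1) - v (trapLoc ω (i + 1)) = v (trapLoc ω i + 1) - v (trapLoc ω i)
      - 2 * (gapLen ω (i + 1) - 1) + v (trapLoc ω (i + 1)) - 3 := by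
  obtain ⟨k, hk⟩ := Nat.exists_eq_add_one.2 (hω.gapLen_pos i)
  have hX : trapLoc ω (i + 1) = trapLoc ω i + k + 1 := by rw [hω.trapLoc_succ, hk, add_assoc]
  have htrap := hv.step_of_eq_true (x := trapLoc ω i + k) (hX ▸ hω.trapLoc_mem (i + 1))
  have hk₀ := hv.eq_of_le_gapLen hω i (t := k) (by omega)
  have hk₁ := hv.eq_of_le_gapLen hω i (t := k + 1) (by omega)
  rw [← add_assoc] at hk₁
  rw [hX, hk, show trapLoc ω i + k + 1 + 1 = trapLoc ω i + k + 2 by ring, htrap, hk₁, hk₀]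
  push_cast
  ring

lemma trapLoc_recurrence (hv : SolvesPoissonEq ω v) (hω : IsTrapConfig ω) (i : ℕ) :
    gapLen ω (i + 1) * v (trapLoc ω (i + 2)) =
      v (trapLoc ω (i + 1))
        * (gapLen ω (i + 1) + gapLen ω (i + 2) + gapLen ω (i + 1) * gapLen ω (i + 2))
      - gapLen ω (i + 2) * v (trapLoc ω i)
      - gapLen ω (i + 1) * gapLen ω (i + 2) * (gapLen ω (i + 1) + gapLen ω (i + 2) + 1) := by
  linear_combination (gapLen ω (i + 1) : ℝ) * hv.value_trapLoc_succ hω (i + 1)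
    + (gapLen ω (i + 1) * gapLen ω (i + 2) : ℝ) * hv.slope_trapLoc_succ hω i
    - (gapLen ω (i + 2) : ℝ) * hv.value_trapLoc_succ hω i

end SolvesPoissonEq

lemma div_le_div_sub_inv_of_recurrence {c P₁ P₂ a₀ a₁ a₂ : ℝ} (hc : 0 < c) (hP₁ : 0 < P₁)
    (hP₂ : 0 < P₂) (ha₀ : 0 ≤ a₀) (ha₁ : 0 ≤ a₁) (hP : P₁ + P₂ ≤ (c - 1) * (P₁ * P₂))
    (hrec : P₁ * a₂ = a₁ * (P₁ + P₂ + P₁ * P₂) - P₂ * a₀ - P₁ * P₂ * (P₁ + P₂ + 1)) :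
    a₂ / (c * P₂ ^ 2) ≤ a₁ / P₂ - c⁻¹ := by
  have h : P₁ * a₂ ≤ P₁ * (c * P₂ * a₁ - P₂ ^ 2) := by
    nlinarith [mul_le_mul_of_nonneg_left hP ha₁, mul_nonneg hP₂.le ha₀,
      mul_nonneg (mul_pos hP₁ hP₂).le (by linarith : 0 ≤ P₁ + 1)]
  have h' := le_of_mul_le_mul_left h hP₁
  rw [div_le_iff₀ (by positivity)]
  field_simp
  linarith

lemma not_eventually_le_sub {u : ℕ → ℝ} {δ : ℝ} (hu : ∀ n, 0 ≤ u n) (hδ : 0 < δ) :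
    ¬ ∀ᶠ n in atTop, u (n + 1) ≤ u n - δ := by
  intro h
  obtain ⟨K, hK⟩ := eventually_atTop.1 h
  have hle (k : ℕ) : u (K + k) ≤ u K - k * δ := by
    induction k with
    | zero => simp
    | succ k ih =>
      rw [← add_assoc]
      push_cast
      linarith [hK (K + k) (by omega)]
  obtain ⟨k, hk⟩ := exists_nat_gt (u K / δ)
  rw [div_lt_iff₀ hδ] at hk
  linarith [hle k, hu (K + k)]

theorem IsTrapConfig.not_solvesPoissonEq {ω : ℕ → Bool} (hω : IsTrapConfig ω) {c : ℝ}
    (hrec : QuadRec ω c) (hc : 1 < c) {v : ℕ → ℝ} (hv₀ : ∀ x, 0 ≤ v x) :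
    ¬ SolvesPoissonEq ω v := by
  intro hv
  have hL (i : ℕ) : (1 : ℝ) ≤ gapLen ω (i + 1) := by exact_mod_cast hω.gapLen_pos i
  refine not_eventually_le_sub (u := fun i => v (trapLoc ω (i + 1)) / gapLen ω (i + 2))
    (fun i => div_nonneg (hv₀ _) (by linarith [hL (i + 1)])) (inv_pos.2 (by linarith)) ?_
  filter_upwards [(hω.tendsto_gapLen hrec hc).eventually_ge_atTop (2 / (c - 1))] with i hi
  have hL₂ : (gapLen ω (i + 2) : ℝ) = c * gapLen ω (i + 1) ^ 2 := hrec (i + 1) (by omega)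
  have hL₃ : (gapLen ω (i + 3) : ℝ) = c * gapLen ω (i + 2) ^ 2 := hrec (i + 2) (by omega)
  have hgrow : (gapLen ω (i + 1) : ℝ) ≤ gapLen ω (i + 2) := by
    rw [hL₂]
    nlinarith [hL i]
  have hP : (gapLen ω (i + 1) + gapLen ω (i + 2) : ℝ) ≤
      (c - 1) * (gapLen ω (i + 1) * gapLen ω (i + 2)) := by
    rw [div_le_iff₀ (by linarith)] at hi
    nlinarith [hL (i + 1)]
  have h := div_le_div_sub_inv_of_recurrence (by linarith) (by linarith [hL i])
    (by linarith [hL (i + 1)]) (hv₀ _) (hv₀ _) hP (hv.trapLoc_recurrence hω i)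
  rwa [← hL₃] at h

theorem expSurvival_eq_top_of_one_lt_c_general
    (ω : ℕ → Bool) (hω : IsTrapConfig ω) (c : ℝ) (hrec : QuadRec ω c)
    (hc : 1 < c)
    {Ω : Type*} [MeasurableSpace Ω] (P : MeasureTheory.Measure Ω)
    (S : ℕ → Ω → Option ℕ) (hS : IsTrappedRW ω P S) :
    expSurvival P S = ⊤ := by
  by_contra hne
  have h₀ : meanLifetime ω 0 ≠ ⊤ := ne_top_of_le_ne_top hne (meanLifetime_zero_le_expSurvival hS)
  exact hω.not_solvesPoissonEq hrec hc (fun _ => ENNReal.toReal_nonneg)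
    (solvesPoissonEq_meanLifetime h₀)

/-- if the quadratic recursion holds with `c > 1` (and `c > |I_1|⁻¹`), then the
expected survival time of the trapped random walk is infinite. -/
theorem expSurvival_eq_top_of_one_lt_c
    (ω : ℕ → Bool) (hω : IsTrapConfig ω) (c : ℝ) (hrec : QuadRec ω c)
    (hc_low : ((gapLen ω 1 : ℝ))⁻¹ < c) (hc : 1 < c)
    {Ω : Type*} [MeasurableSpace Ω] (P : MeasureTheory.Measure Ω)
    (S : ℕ → Ω → Option ℕ) (hS : IsTrappedRW ω P S) :
    expSurvival P S = ⊤ :=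
  expSurvival_eq_top_of_one_lt_c_general ω hω c hrec hc P S hS
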